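/- For j ∈ {1/2, 3/2} and τ on the positive imaginary axis (τ = iT, T > 0), R_{j,1}(τ, τ/4) equals q^{1/16} if j = 1/2 and equals 0 if j = 3/2, where q = e^{2πiτ}. -/

import Mathlib

open Real Complex Filter Topology

noncomputable section

noncomputable def Efun (x : ℝ) : ℝ := 2 * ∫ t in (0:ℝ)..x, Real.exp (-π * t^2)

noncomputable def Rfun (j m : ℝ) (τ w : ℂ) : ℂ :=
  ∑' k : ℤ,
    (((Real.sign (j + 2*m*k - 1/2 - j + 2*m) -
        Efun ((j + 2*m*k - 2*m*(w.im/τ.im)) * Real.sqrt (τ.im/m))) : ℝ) : ℂ) *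
      Complex.exp (-((π:ℂ)*Complex.I*((j:ℂ)+2*(m:ℂ)*(k:ℂ))^2*τ)/(2*(m:ℂ)) +
        2*(π:ℂ)*Complex.I*((j:ℂ)+2*(m:ℂ)*(k:ℂ))*w)

/-! With `τ = iT`, `w = τ/4` and `y = n - 1/2`, the summand of `R_{j;1}` at `n = j + 2k` is
`(sgn(2k + 3/2) - E(y√T)) e^{πT(y²/2 - 1/8)}`: the exponential is even in `y` and
`sgn y - E(y√T)` is odd. For `j = 3/2` (`y = 2k + 1`, where `sgn(2k + 3/2) = sgn y`) the summands
cancel in pairs under `k ↦ -1 - k`. For `j = 1/2` (`y = 2k`) they cancel under `k ↦ -k` except at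
`k = 0`, where `sgn(3/2) = 1 ≠ sgn 0` leaves `e^{-πT/8} = q^{1/16}`; this rearrangement needs absolute
convergence, which follows from the Gaussian tail bound `|sgn x - E x| ≤ 2 e^{-πx²}`. -/

open MeasureTheory Set

theorem tsum_eq_zero_of_comp_equiv_eq_neg {α β : Type*} [AddCommGroup α] [TopologicalSpace α]
    [IsTopologicalAddGroup α] [T2Space α] [IsAddTorsionFree α] (e : β ≃ β) {f : β → α}
    (hf : ∀ b, f (e b) = -f b) : ∑' b, f b = 0 := by
  have h : ∑' b, f b = -∑' b, f b :=
    calc ∑' b, f b = ∑' b, f (e b) := (e.tsum_eq f).symm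
      _ = ∑' b, -f b := tsum_congr hf
      _ = -∑' b, f b := tsum_neg
  rw [← two_nsmul_eq_zero, two_nsmul]
  nth_rewrite 1 [h]
  exact neg_add_cancel _

lemma Real.sign_mul_of_pos_right {a b : ℝ} (hb : 0 < b) : Real.sign (a * b) = Real.sign a := by
  rcases lt_trichotomy a 0 with ha | rfl | ha
  · rw [Real.sign_of_neg ha, Real.sign_of_neg (mul_neg_of_neg_of_pos ha hb)]
  · rw [zero_mul]
  · rw [Real.sign_of_pos ha, Real.sign_of_pos (mul_pos ha hb)]

lemma Real.sign_two_mul_int_add_three_halves (k : ℤ) :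
    Real.sign (2 * k + 3 / 2) = Real.sign (2 * k + 1) := by
  rcases lt_or_ge k 0 with hk | hk
  · have hk' : (k : ℝ) ≤ -1 := by exact_mod_cast Int.le_sub_one_of_lt hk
    rw [Real.sign_of_neg (by linarith), Real.sign_of_neg (by linarith)]
  · have hk' : (0 : ℝ) ≤ k := by exact_mod_cast hk
    rw [Real.sign_of_pos (by linarith), Real.sign_of_pos (by linarith)]

lemma Real.sign_two_mul_int_add_three_halves_eq_ite (k : ℤ) :
    Real.sign (2 * k + 3 / 2) = Real.sign (2 * k) + if k = 0 then 1 else 0 := by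
  rcases lt_trichotomy k 0 with hk | rfl | hk
  · have hk' : (k : ℝ) ≤ -1 := by exact_mod_cast Int.le_sub_one_of_lt hk
    rw [Real.sign_of_neg (by linarith), Real.sign_of_neg (by linarith), if_neg hk.ne]
    ring
  · norm_num [Real.sign_of_pos]
  · have hk' : (1 : ℝ) ≤ k := by exact_mod_cast hk
    rw [Real.sign_of_pos (by linarith), Real.sign_of_pos (by linarith), if_neg hk.ne']
    ring

lemma Efun_zero : Efun 0 = 0 := by simp [Efun]

lemma Efun_neg (x : ℝ) : Efun (-x) = -Efun x := by
  have h := intervalIntegral.integral_comp_neg (a := 0) (b := x) fun t => Real.exp (-π * t ^ 2)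
  simp only [neg_sq, neg_zero] at h
  rw [Efun, Efun, intervalIntegral.integral_symm (-x) 0, ← h, mul_neg]

lemma one_sub_Efun_eq (x : ℝ) : 1 - Efun x = 2 * ∫ t in Ioi x, Real.exp (-π * t ^ 2) := by
  have hg := (integrable_exp_neg_mul_sq pi_pos).integrableOn (s := Ioi (0:ℝ))
  have hsplit := intervalIntegral.integral_interval_add_Ioi hg
    ((integrable_exp_neg_mul_sq pi_pos).integrableOn (s := Ioi x))
  rw [integral_gaussian_Ioi, div_self pi_ne_zero, Real.sqrt_one] at hsplit
  rw [Efun]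
  linarith

lemma abs_one_sub_Efun_le {x : ℝ} (hx : 0 ≤ x) : |1 - Efun x| ≤ 2 * Real.exp (-π * x ^ 2) := by
  have hg : Integrable fun t : ℝ => Real.exp (-π * t ^ 2) := integrable_exp_neg_mul_sq pi_pos
  have hshift : Integrable fun t => Real.exp (-π * x ^ 2) * Real.exp (-π * (t - x) ^ 2) :=
    (hg.comp_sub_right x).const_mul _
  rw [one_sub_Efun_eq, abs_of_nonneg (by positivity)]
  gcongr 2 * ?_
  calc ∫ t in Ioi x, Real.exp (-π * t ^ 2)
      ≤ ∫ t in Ioi x, Real.exp (-π * x ^ 2) * Real.exp (-π * (t - x) ^ 2) := by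
        refine setIntegral_mono_on hg.integrableOn hshift.integrableOn measurableSet_Ioi
          fun t ht => ?_
        -- `t² ≥ x² + (t - x)²` for `t ≥ x ≥ 0`
        rw [← Real.exp_add, Real.exp_le_exp]
        nlinarith [pi_pos, mul_nonneg hx (sub_nonneg.2 (le_of_lt (mem_Ioi.1 ht)))]
    _ ≤ ∫ t, Real.exp (-π * x ^ 2) * Real.exp (-π * (t - x) ^ 2) :=
        setIntegral_le_integral hshift (Eventually.of_forall fun _ => by positivity)
    _ = Real.exp (-π * x ^ 2) := by
        rw [integral_const_mul, integral_sub_right_eq_self (fun t => Real.exp (-π * t ^ 2)),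
          integral_gaussian, div_self pi_ne_zero, Real.sqrt_one, mul_one]

lemma abs_sign_sub_Efun_le (x : ℝ) : |Real.sign x - Efun x| ≤ 2 * Real.exp (-π * x ^ 2) := by
  rcases lt_trichotomy x 0 with hx | rfl | hx
  · have h := abs_one_sub_Efun_le (neg_nonneg.2 hx.le)
    rwa [Efun_neg, neg_sq, sub_neg_eq_add, ← abs_neg, neg_add, ← sub_eq_add_neg,
      ← Real.sign_of_neg hx] at h
  · simp [Efun_zero]
  · rw [Real.sign_of_pos hx]
    exact abs_one_sub_Efun_le hx.le

def Rterm (T s y : ℝ) : ℝ :=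
  (Real.sign s - Efun (y * √T)) * Real.exp (π * T * (y ^ 2 / 2 - 1 / 8))

lemma Rterm_neg (T s y : ℝ) : Rterm T (-s) (-y) = -Rterm T s y := by
  simp only [Rterm, Real.sign_neg, neg_mul, Efun_neg, neg_sq]
  ring

lemma abs_Rterm_self_le {T : ℝ} (hT : 0 < T) (y : ℝ) :
    |Rterm T y y| ≤ 2 * Real.exp (-π * (T * y ^ 2 / 2)) := by
  have hsign : Real.sign y = Real.sign (y * √T) :=
    (Real.sign_mul_of_pos_right (Real.sqrt_pos.2 hT)).symm
  have hsq : (y * √T) ^ 2 = T * y ^ 2 := by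
    rw [mul_pow, Real.sq_sqrt hT.le, mul_comm]
  rw [Rterm, abs_mul, abs_of_pos (Real.exp_pos _), hsign]
  calc |Real.sign (y * √T) - Efun (y * √T)| * Real.exp (π * T * (y ^ 2 / 2 - 1 / 8))
      ≤ 2 * Real.exp (-π * (y * √T) ^ 2) * Real.exp (π * T * (y ^ 2 / 2 - 1 / 8)) := by
        gcongr
        exact abs_sign_sub_Efun_le _
    _ = 2 * Real.exp (-π * (T * y ^ 2 / 2) - π * T / 8) := by
        rw [mul_assoc, ← Real.exp_add, hsq]
        ring_nf
    _ ≤ 2 * Real.exp (-π * (T * y ^ 2 / 2)) := by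
        gcongr
        linarith [mul_pos pi_pos hT]

lemma summable_Rterm_two_mul {T : ℝ} (hT : 0 < T) :
    Summable fun k : ℤ => Rterm T (2 * k) (2 * k) := by
  refine .of_norm_bounded
    ((summable_pow_mul_jacobiTheta₂_term_bound 0 (mul_pos two_pos hT) 0).mul_left 2) fun k => ?_
  rw [Real.norm_eq_abs]
  convert abs_Rterm_self_le hT (2 * k) using 3
  simp only [pow_zero, one_mul, mul_zero, zero_mul, sub_zero]
  ring_nf

lemma Rfun_one_I_mul (j : ℝ) {T : ℝ} (hT : T ≠ 0) :
    Rfun j 1 (I * T) (I * T / 4) =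
      ∑' k : ℤ, (Rterm T (2 * k + 3 / 2) (j + 2 * k - 1 / 2) : ℂ) := by
  refine tsum_congr fun k => ?_
  have him : (I * T).im = T := by simp
  have him4 : (I * T / 4).im = T / 4 := by simp
  have hsign : j + 2 * 1 * (k : ℝ) - 1 / 2 - j + 2 * 1 = 2 * k + 3 / 2 := by ring
  have harg : (j + 2 * 1 * (k : ℝ) - 2 * 1 * (T / 4 / T)) * √(T / 1) =
      (j + 2 * k - 1 / 2) * √T := by
    field_simp
    ring
  have hexp : -(π * I * (j + 2 * ((1 : ℝ) : ℂ) * k) ^ 2 * (I * T)) / (2 * ((1 : ℝ) : ℂ)) +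
      2 * π * I * (j + 2 * ((1 : ℝ) : ℂ) * k) * (I * T / 4) =
      ((π * T * ((j + 2 * k - 1 / 2) ^ 2 / 2 - 1 / 8) : ℝ) : ℂ) := by
    push_cast
    linear_combination (-(π * T * ((j + 2 * k) ^ 2 - (j + 2 * k))) / 2) * I_sq
  rw [Rterm, him, him4, hsign, harg, hexp, ← ofReal_exp, ← ofReal_mul]

lemma tsum_Rterm_half {T : ℝ} (hT : 0 < T) :
    ∑' k : ℤ, Rterm T (2 * k + 3 / 2) (1 / 2 + 2 * k - 1 / 2) = Real.exp (-(π * T / 8)) := by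
  have hterm : ∀ k : ℤ, Rterm T (2 * k + 3 / 2) (1 / 2 + 2 * k - 1 / 2) =
      Rterm T (2 * k) (2 * k) + if k = 0 then Real.exp (-(π * T / 8)) else 0 := by
    intro k
    rw [show (1 : ℝ) / 2 + 2 * k - 1 / 2 = 2 * k by ring, Rterm, Rterm,
      Real.sign_two_mul_int_add_three_halves_eq_ite]
    split_ifs with hk
    · subst hk
      simp only [Int.cast_zero, mul_zero, zero_mul, Real.sign_zero, Efun_zero]
      ring_nf
    · ring
  have hodd : ∑' k : ℤ, Rterm T (2 * k) (2 * k) = 0 :=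
    tsum_eq_zero_of_comp_equiv_eq_neg (Equiv.neg ℤ) fun k => by
      simpa only [Equiv.neg_apply, Int.cast_neg, mul_neg] using Rterm_neg T (2 * k) (2 * k)
  rw [tsum_congr hterm, (summable_Rterm_two_mul hT).tsum_add (hasSum_ite_eq 0 _).summable, hodd,
    tsum_ite_eq, zero_add]

lemma tsum_Rterm_three_halves (T : ℝ) :
    ∑' k : ℤ, Rterm T (2 * k + 3 / 2) (3 / 2 + 2 * k - 1 / 2) = 0 := by
  have hterm : ∀ k : ℤ, Rterm T (2 * k + 3 / 2) (3 / 2 + 2 * k - 1 / 2) =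
      Rterm T (2 * k + 1) (2 * k + 1) := fun k => by
    rw [Rterm, Rterm, Real.sign_two_mul_int_add_three_halves]
    ring_nf
  rw [tsum_congr hterm]
  refine tsum_eq_zero_of_comp_equiv_eq_neg (Equiv.subLeft (-1)) fun k => ?_
  rw [← Rterm_neg, Equiv.subLeft_apply]
  push_cast
  ring_nf

theorem stmt16 (T : ℝ) (hT : 0 < T) :
    Rfun (1/2) 1 (Complex.I*T) (Complex.I*T/4) =
        Complex.exp (2*(π:ℂ)*Complex.I*(Complex.I*(T:ℂ))*(1/16)) ∧
      Rfun (3/2) 1 (Complex.I*T) (Complex.I*T/4) = 0 := by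
  refine ⟨?_, ?_⟩
  · rw [Rfun_one_I_mul _ hT.ne', ← ofReal_tsum, tsum_Rterm_half hT, ofReal_exp]
    congr 1
    push_cast
    linear_combination (-(π * T / 8)) * I_sq
  · rw [Rfun_one_I_mul _ hT.ne', ← ofReal_tsum, tsum_Rterm_three_halves, ofReal_zero]

end
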